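/- Let X̂ : ℂ → ℝ⁸ be given by X̂ = ( i(z−z̄)(1 + r⁶/9), −(z+z̄)(1 + r⁶/9), i(z̄−z)(r²/2 + 2r⁴/3), (z̄+z)(r²/2 + 2r⁴/3), i(z²−z̄²)(1 − r⁴/12), −(z²+z̄²)(1 − r⁴/12), 1 − r² − 3r⁴/4 + 4r⁶/9 − r⁸/36, 1 + r² + 5r⁴/4 + 4r⁶/9 + r⁸/36 ), r² = |z|². Then ⟨X̂, X̂⟩ = 0 for the Lorentz form ⟨Y,Y⟩ = Σᵢ₌₁⁷ Yᵢ² − Y₈², and (1/2)⟨X̂_z, X̂_z̄⟩ = 1 + 4r² + r⁴/4 + 2r⁶/9 + 4r⁸/9 + r¹⁰/36 + r¹²/81 > 0 for all z. -/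

import Mathlib

open Finset Complex

/-- The ℂ-bilinear Lorentz form on ℂ⁸ (signature (7,1), last coordinate
timelike). -/
noncomputable def lor8 (a b : Fin 8 → ℂ) : ℂ :=
  (∑ i, a i * b i) - 2 * a 7 * b 7

/-- The Wirtinger derivative ∂/∂z. -/
noncomputable def wderivZ {E : Type*} [NormedAddCommGroup E] [NormedSpace ℂ E]
    (f : ℂ → E) (z : ℂ) : E :=
  (2 : ℂ)⁻¹ • (fderiv ℝ f z 1 - Complex.I • fderiv ℝ f z Complex.I)

/-- The Wirtinger derivative ∂/∂z̄. -/
noncomputable def wderivZbar {E : Type*} [NormedAddCommGroup E] [NormedSpace ℂ E]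
    (f : ℂ → E) (z : ℂ) : E :=
  (2 : ℂ)⁻¹ • (fderiv ℝ f z 1 + Complex.I • fderiv ℝ f z Complex.I)

/-- The lift X̂ of (8.4): the lift of the Willmore surface x̂ of Example 1. -/
noncomputable def Xhat (z : ℂ) : Fin 8 → ℂ :=
  ![ I * (z - (starRingEnd ℂ) z) * (1 + (normSq z : ℂ) ^ 3 / 9),
     -(z + (starRingEnd ℂ) z) * (1 + (normSq z : ℂ) ^ 3 / 9),
     I * ((starRingEnd ℂ) z - z) * ((normSq z : ℂ) / 2 + 2 * (normSq z : ℂ) ^ 2 / 3),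
     ((starRingEnd ℂ) z + z) * ((normSq z : ℂ) / 2 + 2 * (normSq z : ℂ) ^ 2 / 3),
     I * (z ^ 2 - (starRingEnd ℂ z) ^ 2) * (1 - (normSq z : ℂ) ^ 2 / 12),
     -(z ^ 2 + (starRingEnd ℂ z) ^ 2) * (1 - (normSq z : ℂ) ^ 2 / 12),
     1 - (normSq z : ℂ) - 3 * (normSq z : ℂ) ^ 2 / 4 + 4 * (normSq z : ℂ) ^ 3 / 9
       - (normSq z : ℂ) ^ 4 / 36,
     1 + (normSq z : ℂ) + 5 * (normSq z : ℂ) ^ 2 / 4 + 4 * (normSq z : ℂ) ^ 3 / 9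
       + (normSq z : ℂ) ^ 4 / 36 ]

/-!
Every component of `Xhat` is a polynomial in `z` and `z̄`, so its Wirtinger derivatives are
obtained by differentiating formally in `z` and `z̄` as if they were independent variables.
With `r² = z z̄`, both identities then become polynomial identities in `z`, `z̄` and `i`
(using `i² = -1`), and the right-hand side is positive because all its coefficients are.
-/

open ComplexConjugate ContinuousLinearMap

section Wirtinger

variable {E : Type*} [NormedAddCommGroup E] [NormedSpace ℂ E]

noncomputable def wirtingerCLM (p q : E) : ℂ →L[ℝ] E :=
  (ContinuousLinearMap.id ℝ ℂ).smulRight p + (conjCLE : ℂ →L[ℝ] ℂ).smulRight q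

@[simp]
theorem wirtingerCLM_apply (p q : E) (h : ℂ) : wirtingerCLM p q h = h • p + conj h • q := by
  simp [wirtingerCLM]

def HasWirtingerDerivAt (f : ℂ → E) (p q : E) (z : ℂ) : Prop :=
  HasFDerivAt f (wirtingerCLM p q) z

theorem hasWirtingerDerivAt_const (c : E) (z : ℂ) :
    HasWirtingerDerivAt (fun _ => c) 0 0 z :=
  (hasFDerivAt_const c z).congr_fderiv (by ext; simp)

theorem hasWirtingerDerivAt_id (z : ℂ) : HasWirtingerDerivAt (fun w => w) 1 0 z :=
  (hasFDerivAt_id z).congr_fderiv (by ext; simp)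

theorem hasWirtingerDerivAt_conj (z : ℂ) : HasWirtingerDerivAt (fun w => conj w) 0 1 z :=
  (conjCLE : ℂ →L[ℝ] ℂ).hasFDerivAt.congr_fderiv (by ext; simp)

namespace HasWirtingerDerivAt

variable {f g : ℂ → E} {p q p' q' : E} {z : ℂ}

theorem wderivZ_eq (h : HasWirtingerDerivAt f p q z) : wderivZ f z = p := by
  rw [wderivZ, h.fderiv]
  simp only [wirtingerCLM_apply, map_one, conj_I, one_smul, neg_smul, smul_add, smul_neg,
    smul_smul, I_mul_I, neg_neg]
  module

theorem wderivZbar_eq (h : HasWirtingerDerivAt f p q z) : wderivZbar f z = q := by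
  rw [wderivZbar, h.fderiv]
  simp only [wirtingerCLM_apply, map_one, conj_I, one_smul, neg_smul, smul_add, smul_neg,
    smul_smul, I_mul_I, neg_neg]
  module

theorem add (hf : HasWirtingerDerivAt f p q z) (hg : HasWirtingerDerivAt g p' q' z) :
    HasWirtingerDerivAt (fun w => f w + g w) (p + p') (q + q') z :=
  (HasFDerivAt.add hf hg).congr_fderiv (by ext; simp only [add_apply, wirtingerCLM_apply]; module)

theorem sub (hf : HasWirtingerDerivAt f p q z) (hg : HasWirtingerDerivAt g p' q' z) :
    HasWirtingerDerivAt (fun w => f w - g w) (p - p') (q - q') z :=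
  (HasFDerivAt.sub hf hg).congr_fderiv (by ext; simp only [sub_apply, wirtingerCLM_apply]; module)

theorem neg (hf : HasWirtingerDerivAt f p q z) :
    HasWirtingerDerivAt (fun w => -f w) (-p) (-q) z :=
  (HasFDerivAt.neg hf).congr_fderiv (by ext; simp only [neg_apply, wirtingerCLM_apply]; module)

theorem vecCons {n : ℕ} {F : ℂ → Fin n → E} {P Q : Fin n → E}
    (hf : HasWirtingerDerivAt f p q z) (hF : HasWirtingerDerivAt F P Q z) :
    HasWirtingerDerivAt (fun w => Matrix.vecCons (f w) (F w)) (Matrix.vecCons p P)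
      (Matrix.vecCons q Q) z := by
  rw [HasWirtingerDerivAt, hasFDerivAt_pi']
  intro i
  induction i using Fin.cases with
  | zero => exact hf.congr_fderiv (by ext; simp)
  | succ i =>
    exact ((proj (R := ℝ) (φ := fun _ : Fin n => E) i).hasFDerivAt.comp z hF).congr_fderiv
      (by ext; simp)

end HasWirtingerDerivAt

end Wirtinger

namespace HasWirtingerDerivAt

variable {f g : ℂ → ℂ} {p q p' q' z : ℂ}

theorem mul (hf : HasWirtingerDerivAt f p q z) (hg : HasWirtingerDerivAt g p' q' z) :
    HasWirtingerDerivAt (fun w => f w * g w) (f z * p' + g z * p) (f z * q' + g z * q) z :=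
  (HasFDerivAt.mul hf hg).congr_fderiv
    (by ext; simp only [add_apply, smul_apply, wirtingerCLM_apply, smul_eq_mul]; ring)

theorem _root_.HasDerivAt.comp_hasWirtingerDerivAt {φ : ℂ → ℂ} {φ' : ℂ}
    (hφ : HasDerivAt φ φ' (f z)) (hf : HasWirtingerDerivAt f p q z) :
    HasWirtingerDerivAt (fun w => φ (f w)) (φ' * p) (φ' * q) z :=
  ((hφ.hasFDerivAt.restrictScalars ℝ).comp z hf).congr_fderiv (by
    ext
    simp only [comp_apply, wirtingerCLM_apply, smul_eq_mul, coe_restrictScalars',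
      toSpanSingleton_apply]
    ring)

theorem pow (hf : HasWirtingerDerivAt f p q z) (n : ℕ) :
    HasWirtingerDerivAt (fun w => f w ^ n) (n * f z ^ (n - 1) * p) (n * f z ^ (n - 1) * q) z :=
  (hasDerivAt_pow n (f z)).comp_hasWirtingerDerivAt hf

theorem div_const (hf : HasWirtingerDerivAt f p q z) (c : ℂ) :
    HasWirtingerDerivAt (fun w => f w / c) (p / c) (q / c) z := by
  simpa [div_eq_inv_mul] using ((hasDerivAt_id (f z)).div_const c).comp_hasWirtingerDerivAt hf

end HasWirtingerDerivAt

theorem hasWirtingerDerivAt_normSq (z : ℂ) :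
    HasWirtingerDerivAt (fun w => (normSq w : ℂ)) (conj z) z z := by
  simpa [mul_conj] using (hasWirtingerDerivAt_id z).mul (hasWirtingerDerivAt_conj z)

theorem lor8_Xhat_self (z : ℂ) : lor8 (Xhat z) (Xhat z) = 0 := by
  simp only [lor8, Fin.sum_univ_eight, Xhat, Matrix.cons_val, ← mul_conj]
  ring_nf
  simp only [I_sq]
  ring

theorem lor8_wderivZ_Xhat_wderivZbar_Xhat (z : ℂ) :
    (1 / 2) * lor8 (wderivZ Xhat z) (wderivZbar Xhat z)
      = 1 + 4 * (normSq z : ℂ) + (normSq z : ℂ) ^ 2 / 4 + 2 * (normSq z : ℂ) ^ 3 / 9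
        + 4 * (normSq z : ℂ) ^ 4 / 9 + (normSq z : ℂ) ^ 5 / 36 + (normSq z : ℂ) ^ 6 / 81 := by
  have hz := hasWirtingerDerivAt_id z
  have hzbar := hasWirtingerDerivAt_conj z
  have hr := hasWirtingerDerivAt_normSq z
  have hk := fun c : ℂ => hasWirtingerDerivAt_const c z
  -- the two derivative vectors `_ _` are produced by unification with the rules applied below
  have hX : HasWirtingerDerivAt Xhat _ _ z :=
    (((hk I).mul (hz.sub hzbar)).mul ((hk 1).add ((hr.pow 3).div_const 9))).vecCons <|
    ((hz.add hzbar).neg.mul ((hk 1).add ((hr.pow 3).div_const 9))).vecCons <|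
    (((hk I).mul (hzbar.sub hz)).mul
      ((hr.div_const 2).add (((hk 2).mul (hr.pow 2)).div_const 3))).vecCons <|
    ((hzbar.add hz).mul ((hr.div_const 2).add (((hk 2).mul (hr.pow 2)).div_const 3))).vecCons <|
    (((hk I).mul ((hz.pow 2).sub (hzbar.pow 2))).mul
      ((hk 1).sub ((hr.pow 2).div_const 12))).vecCons <|
    (((hz.pow 2).add (hzbar.pow 2)).neg.mul ((hk 1).sub ((hr.pow 2).div_const 12))).vecCons <|
    (((((hk 1).sub hr).sub (((hk 3).mul (hr.pow 2)).div_const 4)).add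
      (((hk 4).mul (hr.pow 3)).div_const 9)).sub ((hr.pow 4).div_const 36)).vecCons <|
    (((((hk 1).add hr).add (((hk 5).mul (hr.pow 2)).div_const 4)).add
      (((hk 4).mul (hr.pow 3)).div_const 9)).add ((hr.pow 4).div_const 36)).vecCons <|
    hasWirtingerDerivAt_const ![] z
  rw [hX.wderivZ_eq, hX.wderivZbar_eq]
  simp only [lor8, Fin.sum_univ_eight, Matrix.cons_val, ← mul_conj]
  ring_nf
  simp only [I_sq]
  ring

/-- X̂ is light-like, and (1/2)⟨X̂_z, X̂_z̄⟩ equals the stated positive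
polynomial in r² = |z|². -/
theorem stmt_18 : ∀ z : ℂ,
    lor8 (Xhat z) (Xhat z) = 0 ∧
    (1 / 2) * lor8 (wderivZ Xhat z) (wderivZbar Xhat z)
      = 1 + 4 * (normSq z : ℂ) + (normSq z : ℂ) ^ 2 / 4 + 2 * (normSq z : ℂ) ^ 3 / 9
        + 4 * (normSq z : ℂ) ^ 4 / 9 + (normSq z : ℂ) ^ 5 / 36
        + (normSq z : ℂ) ^ 6 / 81 ∧
    (0 : ℝ) < 1 + 4 * normSq z + (normSq z) ^ 2 / 4 + 2 * (normSq z) ^ 3 / 9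
        + 4 * (normSq z) ^ 4 / 9 + (normSq z) ^ 5 / 36 + (normSq z) ^ 6 / 81 := by
  intro z
  have hr := normSq_nonneg z
  exact ⟨lor8_Xhat_self z, lor8_wderivZ_Xhat_wderivZbar_Xhat z, by positivity⟩
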